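/- Let n ≥ 1, k > 0, c > 0, let H be a symmetric positive definite real n×n matrix, θ* ∈ ℝⁿ, h₀ < 0, and let h₁ ∈ ℝⁿ be nonzero. Define h(θ) := h₀ + h₁ᵀ(θ − θ*) and θ_smin := θ* + (|h₀|/(h₁ᵀH⁻¹h₁)) H⁻¹h₁. Then θ_smin satisfies −k(θ_smin − θ*) + (h₁/‖h₁‖²)·max{ k(θ_smin − θ*)ᵀh₁ − c·h(θ_smin), 0 } = 0 if and only if H⁻¹h₁ = ((h₁ᵀH⁻¹h₁)/‖h₁‖²) h₁, i.e., if and only if h₁ is an eigenvector of H⁻¹ (equivalently of H). -/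

import Mathlib

noncomputable section
open Matrix

/-- The linear barrier `h(θ) = h₀ + h₁ᵀ(θ−θ*)`. -/
def hfun (n : ℕ) (h₀ : ℝ) (h₁ : Fin n → ℝ) (θs : Fin n → ℝ) (θ : Fin n → ℝ) : ℝ :=
  h₀ + h₁ ⬝ᵥ (θ - θs)

/-- The constrained minimizer `θ_smin = θ* + (|h₀|/(h₁ᵀH⁻¹h₁))H⁻¹h₁`. -/
def θsmin (n : ℕ) (H : Matrix (Fin n) (Fin n) ℝ) (θs : Fin n → ℝ) (h₀ : ℝ)
    (h₁ : Fin n → ℝ) : Fin n → ℝ :=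
  θs + (|h₀| / (h₁ ⬝ᵥ (H⁻¹ *ᵥ h₁))) • (H⁻¹ *ᵥ h₁)

/-- `θ_smin` is an equilibrium of the NB-ASfES dynamics if and only if
`H⁻¹h₁ = ((h₁ᵀH⁻¹h₁)/‖h₁‖²)h₁`, i.e. iff `h₁` is an eigenvector of `H⁻¹`. -/
theorem stmt18 (n : ℕ) (hn : 1 ≤ n) (k c : ℝ) (hk : 0 < k) (hc : 0 < c)
    (H : Matrix (Fin n) (Fin n) ℝ) (hH : H.PosDef)
    (θs : Fin n → ℝ) (h₀ : ℝ) (hh₀ : h₀ < 0) (h₁ : Fin n → ℝ) (hh₁ : h₁ ≠ 0) :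
    ((-k) • (θsmin n H θs h₀ h₁ - θs) +
        ((h₁ ⬝ᵥ h₁)⁻¹ *
          max (k * ((θsmin n H θs h₀ h₁ - θs) ⬝ᵥ h₁) -
            c * hfun n h₀ h₁ θs (θsmin n H θs h₀ h₁)) 0) • h₁ = 0 ↔
      H⁻¹ *ᵥ h₁ = ((h₁ ⬝ᵥ (H⁻¹ *ᵥ h₁)) / (h₁ ⬝ᵥ h₁)) • h₁) ∧
    (H⁻¹ *ᵥ h₁ = ((h₁ ⬝ᵥ (H⁻¹ *ᵥ h₁)) / (h₁ ⬝ᵥ h₁)) • h₁ ↔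
      ∃ μ : ℝ, H⁻¹ *ᵥ h₁ = μ • h₁) := by
  set v : Fin n → ℝ := H⁻¹ *ᵥ h₁ with hv
  set q : ℝ := h₁ ⬝ᵥ v with hqdef
  have hq : 0 < q := by
    have := hH.inv.dotProduct_mulVec_pos hh₁
    simpa [hqdef, hv] using this
  have habs0 : 0 < |h₀| := abs_pos.mpr hh₀.ne
  have hNnn : 0 ≤ h₁ ⬝ᵥ h₁ := Finset.sum_nonneg fun i _ => mul_self_nonneg _
  have hN : 0 < h₁ ⬝ᵥ h₁ :=
    hNnn.lt_of_ne fun h => hh₁ (dotProduct_self_eq_zero.mp h.symm)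
  have habs : |h₀| = -h₀ := abs_of_neg hh₀
  have hdiff : θsmin n H θs h₀ h₁ - θs = (|h₀| / q) • v := by
    simp [θsmin, hv, hqdef]
  have hvq : v ⬝ᵥ h₁ = q := by rw [hqdef, dotProduct_comm]
  have hfz : hfun n h₀ h₁ θs (θsmin n H θs h₀ h₁) = 0 := by
    have : θsmin n H θs h₀ h₁ - θs = (|h₀| / q) • v := hdiff
    rw [hfun, this, dotProduct_smul, ← hqdef]
    rw [smul_eq_mul, habs, div_mul_cancel₀ _ hq.ne']; ring
  have hdot : (θsmin n H θs h₀ h₁ - θs) ⬝ᵥ h₁ = |h₀| := by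
    rw [hdiff, smul_dotProduct, hvq, smul_eq_mul]
    field_simp
  have hmax : max (k * ((θsmin n H θs h₀ h₁ - θs) ⬝ᵥ h₁) -
      c * hfun n h₀ h₁ θs (θsmin n H θs h₀ h₁)) 0 = k * |h₀| := by
    rw [hdot, hfz, mul_zero, sub_zero]
    exact max_eq_left (by positivity)
  have hapos : 0 < k * |h₀| / q := div_pos (mul_pos hk habs0) hq
  constructor
  · rw [hmax, hdiff]
    constructor
    · intro h
      have h' : (k * |h₀| / q) • v = ((h₁ ⬝ᵥ h₁)⁻¹ * (k * |h₀|)) • h₁ := by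
        have := congrArg (fun x => x + (k * |h₀| / q) • v) h
        simp only [zero_add] at this
        rw [← this]
        ext i
        simp [smul_smul, mul_comm, mul_assoc, mul_left_comm]
        ring
      have h'' : v = ((k * |h₀| / q)⁻¹ * ((h₁ ⬝ᵥ h₁)⁻¹ * (k * |h₀|))) • h₁ := by
        rw [← smul_smul, ← h', smul_smul, inv_mul_cancel₀ hapos.ne', one_smul]
      rw [h'']
      congr 1
      field_simp
    · intro h
      rw [h]
      ext i
      simp only [Pi.add_apply, Pi.smul_apply, Pi.zero_apply, smul_eq_mul]
      field_simp
      ring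
  · constructor
    · intro h
      exact ⟨_, h⟩
    · rintro ⟨μ, hμ⟩
      have : q = μ * (h₁ ⬝ᵥ h₁) := by
        rw [hqdef, hμ, dotProduct_smul, smul_eq_mul]
      rw [hμ, this]
      congr 1
      field_simp
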